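/- arXiv:2605.08677 — 2 statements merged into one kernel-verified Lean document; each statement's English description precedes it below -/
import Mathlib

section
/- Let $B, A \in \mathbb{R}^{n \times k}$ and let $B^\top A = U \Sigma V^\top$ be a singular value decomposition of $B^\top A$. Then $Q = U V^\top$ is a minimizer of $\|A - B Q\|_F$ over $Q \in O(k)$. -/
open Matrix

/-! The squared Frobenius distance `‖A - BQ‖²` equals `tr AᵀA + tr BᵀB - 2 tr(Qᵀ BᵀA)` for every
orthogonal `Q`, so minimizing it means maximizing `tr(Qᵀ BᵀA)`. Writing `BᵀA = U Σ Vᵀ`, this trace is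
`tr(W Σ) = ∑ Wᵢᵢ σᵢ` with `W = Vᵀ Qᵀ U` orthogonal. Entries of an orthogonal matrix are at most `1`
and `σᵢ ≥ 0`, so the trace is at most `∑ σᵢ`, which is attained at `Q = U Vᵀ`, where `W = 1`. -/

/-- Frobenius norm of a real matrix. -/
noncomputable def frob {n k : ℕ} (A : Matrix (Fin n) (Fin k) ℝ) : ℝ :=
  Real.sqrt (∑ i, ∑ j, (A i j) ^ 2)

section

variable {m n : Type*} [Fintype m] [Fintype n] [DecidableEq n]

lemma frob_eq_sqrt_trace {p q : ℕ} (M : Matrix (Fin p) (Fin q) ℝ) :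
    frob M = √(trace (Mᵀ * M)) := by
  rw [frob, Finset.sum_comm]
  simp [trace, mul_apply, sq]

lemma trace_transpose_mul_sub_mul_orthogonal (A B : Matrix m n ℝ) {Q : Matrix n n ℝ}
    (hQ : Q ∈ orthogonalGroup n ℝ) :
    trace ((A - B * Q)ᵀ * (A - B * Q)) =
      trace (Aᵀ * A) + trace (Bᵀ * B) - 2 * trace (Qᵀ * (Bᵀ * A)) := by
  have hcross : trace (Aᵀ * (B * Q)) = trace (Qᵀ * (Bᵀ * A)) := by
    rw [← trace_transpose]
    simp only [transpose_mul, transpose_transpose, Matrix.mul_assoc]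
  have hBQ : trace ((B * Q)ᵀ * (B * Q)) = trace (Bᵀ * B) := by
    rw [transpose_mul, Matrix.mul_assoc, trace_mul_comm, Matrix.mul_assoc, Matrix.mul_assoc,
      (mem_orthogonalGroup_iff n ℝ).mp hQ, Matrix.mul_one]
  have hcross' : trace ((B * Q)ᵀ * A) = trace (Qᵀ * (Bᵀ * A)) := by
    rw [transpose_mul, Matrix.mul_assoc]
  rw [transpose_sub, Matrix.sub_mul, Matrix.mul_sub, Matrix.mul_sub]
  simp only [trace_sub, hcross, hcross', hBQ]
  ring

lemma trace_orthogonal_mul_diagonal_le {W : Matrix n n ℝ} (hW : W ∈ orthogonalGroup n ℝ)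
    {S : n → ℝ} (hS : ∀ i, 0 ≤ S i) : trace (W * diagonal S) ≤ ∑ i, S i := by
  simp only [trace, diag, mul_diagonal]
  refine Finset.sum_le_sum fun i _ => ?_
  have hWii : W i i ≤ 1 := (le_abs_self _).trans (entry_norm_bound_of_unitary hW i i)
  nlinarith [hS i]

lemma trace_transpose_mul_svd (Q U V : Matrix n n ℝ) (S : n → ℝ) :
    trace (Qᵀ * (U * diagonal S * Vᵀ)) = trace ((Vᵀ * Qᵀ * U) * diagonal S) := by
  rw [← Matrix.mul_assoc, ← Matrix.mul_assoc, trace_mul_comm, ← Matrix.mul_assoc,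
    ← Matrix.mul_assoc]

end

/-- if `Bᵀ A = U Σ Vᵀ` is a singular value decomposition, then
`Q = U Vᵀ` minimizes `‖A - B Q‖_F` over the orthogonal group `O(k)`. -/
theorem stmt_2 {n k : ℕ} (A B : Matrix (Fin n) (Fin k) ℝ)
    (U V : Matrix (Fin k) (Fin k) ℝ)
    (hU : U ∈ Matrix.orthogonalGroup (Fin k) ℝ)
    (hV : V ∈ Matrix.orthogonalGroup (Fin k) ℝ)
    (S : Fin k → ℝ) (hS : ∀ i, 0 ≤ S i)
    (hSVD : Bᵀ * A = U * Matrix.diagonal S * Vᵀ) :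
    U * Vᵀ ∈ Matrix.orthogonalGroup (Fin k) ℝ ∧
      ∀ Q' ∈ Matrix.orthogonalGroup (Fin k) ℝ,
        frob (A - B * (U * Vᵀ)) ≤ frob (A - B * Q') := by
  have hVt : Vᵀ ∈ orthogonalGroup (Fin k) ℝ := transpose_mem_unitaryGroup_iff.mpr hV
  have hQ : U * Vᵀ ∈ orthogonalGroup (Fin k) ℝ := mul_mem hU hVt
  refine ⟨hQ, fun Q' hQ' => ?_⟩
  have hW : Vᵀ * Q'ᵀ * U ∈ orthogonalGroup (Fin k) ℝ :=
    mul_mem (mul_mem hVt (transpose_mem_unitaryGroup_iff.mpr hQ')) hU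
  have hW₀ : Vᵀ * (U * Vᵀ)ᵀ * U = 1 := by
    rw [transpose_mul, transpose_transpose, Matrix.mul_assoc, Matrix.mul_assoc,
      (mem_orthogonalGroup_iff' _ ℝ).mp hU, Matrix.mul_one, (mem_orthogonalGroup_iff' _ ℝ).mp hV]
  have htrace : trace (Q'ᵀ * (Bᵀ * A)) ≤ trace ((U * Vᵀ)ᵀ * (Bᵀ * A)) := by
    rw [hSVD, trace_transpose_mul_svd, trace_transpose_mul_svd, hW₀, Matrix.one_mul, trace_diagonal]
    exact trace_orthogonal_mul_diagonal_le hW hS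
  rw [frob_eq_sqrt_trace, frob_eq_sqrt_trace, trace_transpose_mul_sub_mul_orthogonal A B hQ,
    trace_transpose_mul_sub_mul_orthogonal A B hQ']
  gcongr
end

section
/- Suppose self-loops are observed, i.e., $\Theta_{ij} = \alpha_i + \alpha_j + \langle z_i, z_j\rangle$ is known for all $1 \le i \le j \le n$ (including $i = j$). If $[Z^\star, \alpha^\star]$ and $[\tilde Z, \tilde\alpha]$ give $\Theta^\star_{ij} = \tilde\Theta_{ij}$ for all $i \le j$, equivalently $Z^\star Z^{\star\top} + \alpha^\star 1_n^\top + 1_n\alpha^{\star\top} = \tilde Z\tilde Z^\top + \tilde\alpha 1_n^\top + 1_n\tilde\alpha^\top$, and additionally $1_n^\top Z^\star = 1_n^\top \tilde Z = 0$ and $\mathrm{rank}(Z^\star) = k$ with $n \ge k+2$, then $\tilde\alpha = \alpha^\star$ and there exists $Q \in O(k)$ with $\tilde Z = Z^\star Q$. -/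
/-!
Multiplying the identity of the two parameterisations on the left by `1ᵀ` kills both Gram parts
(the latent positions are centred) and leaves `(∑ α) 1ᵀ + n αᵀ` on each side; summing once more
gives `∑ α⋆ = ∑ α̃`, hence `α⋆ = α̃`. Then `Z⋆ Z⋆ᵀ = Z̃ Z̃ᵀ`. With a left inverse `L` of the full
column rank matrix `Z⋆`, the matrix `Q = L Z̃` satisfies `Q Qᵀ = (L Z⋆)(L Z⋆)ᵀ = 1`, and `Z̃ = Z⋆ Q`
because `(Z̃ - Z⋆ Q)(Z̃ - Z⋆ Q)ᵀ` expands to zero.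
-/

open Matrix

namespace Matrix

variable {m n ι : Type*} [Fintype n]

theorem exists_mul_eq_one_of_rank_eq_card [Fintype m] {K : Type*} [Field K] [DecidableEq n]
    {A : Matrix m n K} (hA : A.rank = Fintype.card n) : ∃ B : Matrix n m K, B * A = 1 := by
  rw [← vecMul_surjective_iff_exists_left_inverse]
  have hrange : LinearMap.range Aᵀ.mulVecLin = ⊤ := by
    apply Submodule.eq_top_of_finrank_eq
    rw [← rank, rank_transpose, hA, Module.finrank_fintype_fun_eq_card]
  intro y
  obtain ⟨x, hx⟩ := LinearMap.range_eq_top.mp hrange y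
  exact ⟨x, by simpa [mulVec_transpose] using hx⟩

theorem eq_of_mul_transpose_eq {X Y : Matrix m n ℝ} (hXY : X * Yᵀ = X * Xᵀ)
    (hY : Y * Yᵀ = X * Xᵀ) : X = Y := by
  have hYX : Y * Xᵀ = X * Xᵀ := by
    rw [← transpose_transpose (Y * Xᵀ), transpose_mul, transpose_transpose, hXY,
      transpose_mul, transpose_transpose]
  have hzero : (X - Y) * (X - Y)ᴴ = 0 := by
    rw [conjTranspose_eq_transpose_of_trivial, transpose_sub, Matrix.sub_mul, Matrix.mul_sub,
      Matrix.mul_sub, hXY, hYX, hY, sub_self]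
  exact sub_eq_zero.mp (self_mul_conjTranspose_eq_zero.mp hzero)

theorem exists_mem_orthogonalGroup_of_mul_transpose_eq [Fintype m] [DecidableEq n]
    {X Y : Matrix m n ℝ} (hX : X.rank = Fintype.card n) (h : X * Xᵀ = Y * Yᵀ) :
    ∃ Q ∈ orthogonalGroup n ℝ, Y = X * Q := by
  obtain ⟨L, hL⟩ := exists_mul_eq_one_of_rank_eq_card hX
  have hQ : L * Y * (L * Y)ᵀ = 1 := by
    calc L * Y * (L * Y)ᵀ = L * (Y * Yᵀ) * Lᵀ := by simp only [transpose_mul, Matrix.mul_assoc]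
      _ = L * X * (L * X)ᵀ := by simp only [← h, transpose_mul, Matrix.mul_assoc]
      _ = 1 := by rw [hL, transpose_one, Matrix.mul_one]
  refine ⟨L * Y, by rwa [mem_orthogonalGroup_iff], eq_of_mul_transpose_eq ?_ ?_⟩
  · calc Y * (X * (L * Y))ᵀ = X * Xᵀ * Lᵀ * Xᵀ := by
          simp only [transpose_mul, h, Matrix.mul_assoc]
      _ = X * (L * X)ᵀ * Xᵀ := by simp only [transpose_mul, Matrix.mul_assoc]
      _ = Y * Yᵀ := by rw [hL, transpose_one, Matrix.mul_one, h]
  · calc X * (L * Y) * (X * (L * Y))ᵀ = X * (L * Y * (L * Y)ᵀ) * Xᵀ := by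
          simp only [transpose_mul, Matrix.mul_assoc]
      _ = Y * Yᵀ := by rw [hQ, Matrix.mul_one, h]

theorem ones_vecMul_of_add [Fintype ι] (a : ι → ℝ) :
    (fun _ => (1 : ℝ)) ᵥ* of (fun i j => a i + a j) = fun j => ∑ i, a i + Fintype.card ι * a j := by
  ext j
  simp [vecMul, dotProduct, Finset.sum_add_distrib]

end Matrix

theorem eq_of_sum_add_card_mul_eq {ι : Type*} [Fintype ι] {a b : ι → ℝ}
    (h : ∀ j, ∑ i, a i + Fintype.card ι * a j = ∑ i, b i + Fintype.card ι * b j) : a = b := by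
  funext j
  have hcard : (Fintype.card ι : ℝ) ≠ 0 := 
    have : Nonempty ι := ⟨j⟩
    Nat.cast_ne_zero.mpr Fintype.card_ne_zero
  have hsum : ∑ i, a i = ∑ i, b i := by
    have htotal := Finset.sum_congr rfl fun j (_ : j ∈ Finset.univ) => h j
    simp only [Finset.sum_add_distrib, Finset.sum_const, Finset.card_univ, nsmul_eq_mul,
      ← Finset.mul_sum] at htotal
    exact mul_left_cancel₀ (mul_ne_zero two_ne_zero hcard) (by linarith)
  exact mul_left_cancel₀ hcard (by linarith [h j])

theorem stmt_12_general {n k : ℕ}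
    (Zs tZ : Matrix (Fin n) (Fin k) ℝ) (αs tα : Fin n → ℝ)
    (hΘ : Zs * Zsᵀ + Matrix.of (fun i j => αs i + αs j)
        = tZ * tZᵀ + Matrix.of (fun i j => tα i + tα j))
    (hcen : (fun _ => (1 : ℝ)) ᵥ* Zs = 0)
    (htcen : (fun _ => (1 : ℝ)) ᵥ* tZ = 0)
    (hrank : Zs.rank = k) :
    tα = αs ∧ ∃ Q ∈ Matrix.orthogonalGroup (Fin k) ℝ, tZ = Zs * Q := by
  have hdegree := congrArg ((fun _ => (1 : ℝ)) ᵥ* ·) hΘ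
  simp only [vecMul_add, ← vecMul_vecMul, hcen, htcen, zero_vecMul, zero_add,
    ones_vecMul_of_add] at hdegree
  have hα : tα = αs := (eq_of_sum_add_card_mul_eq (congrFun hdegree)).symm
  have hGram : Zs * Zsᵀ = tZ * tZᵀ := add_right_cancel (hα ▸ hΘ)
  exact ⟨hα, exists_mem_orthogonalGroup_of_mul_transpose_eq (by simpa using hrank) hGram⟩

/-- identifiability with self-loops. If
`Z⋆Z^{⋆⊤} + α⋆1ᵀ + 1α^{⋆⊤} = Z̃Z̃ᵀ + α̃1ᵀ + 1α̃ᵀ`, both latent matrices are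
centered, `Z⋆` has full column rank `k`, and `n ≥ k + 2`, then `α̃ = α⋆` and
`Z̃ = Z⋆ Q` for some orthogonal `Q`. -/
theorem stmt_12 {n k : ℕ} (hn : k + 2 ≤ n)
    (Zs tZ : Matrix (Fin n) (Fin k) ℝ) (αs tα : Fin n → ℝ)
    (hΘ : Zs * Zsᵀ + Matrix.of (fun i j => αs i + αs j)
        = tZ * tZᵀ + Matrix.of (fun i j => tα i + tα j))
    (hcen : (fun _ => (1 : ℝ)) ᵥ* Zs = 0)
    (htcen : (fun _ => (1 : ℝ)) ᵥ* tZ = 0)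
    (hrank : Zs.rank = k) :
    tα = αs ∧ ∃ Q ∈ Matrix.orthogonalGroup (Fin k) ℝ, tZ = Zs * Q :=
  stmt_12_general Zs tZ αs tα hΘ hcen htcen hrank
end
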